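/- Let G be a graph and D a double circuit of B(G) whose circuit partition has at least 4 singular parts {e₁}, {e₂}, {e₃}, {e₄}. Then the edges e₁, e₂, e₃, e₄ span a subgraph of G with at most 4 vertices, and hence G contains a cycle of length at most 4. -/

import Mathlib

open Set

namespace Paper

/-! ### Multigraphs, walks, cycles -/

/-- A multigraph on vertex type `V` with edge type `E`: each edge has an
unordered pair of endpoints (possibly equal, giving a loop). -/
structure Multigraph (V : Type*) (E : Type*) where
  inc : E → Sym2 V

namespace Multigraph

variable {V E : Type*}

/-- `G.IsWalk I u es vs`: starting at vertex `u` and using only edges in `I`,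
the edges `es` form a walk that successively visits the vertices `vs`. -/
inductive IsWalk (G : Multigraph V E) (I : Set E) : V → List E → List V → Prop
  | nil (v : V) : IsWalk G I v [] []
  | cons {u v : V} {e : E} {es : List E} {vs : List V} :
      e ∈ I → G.inc e = s(u, v) → IsWalk G I v es vs → IsWalk G I u (e :: es) (v :: vs)

/-- A walk from `u` to `w` inside the edge set `I`. -/
def IsWalkFrom (G : Multigraph V E) (I : Set E) (u : V) (es : List E) (vs : List V)
    (w : V) : Prop :=
  G.IsWalk I u es vs ∧ (u :: vs).getLast (by simp) = w

/-- `u` and `w` are joined by a walk using edges of `I` (same component of `G[I]`). -/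
def Reachable (G : Multigraph V E) (I : Set E) (u w : V) : Prop :=
  ∃ es vs, G.IsWalkFrom I u es vs w

/-- A cycle based at `v` using edges of `I`: a nonempty closed walk with no repeated
edges and no repeated vertices (except for the base point).  A loop is a cycle of
length `1` and a pair of parallel edges forms a cycle of length `2`. -/
def IsCycle (G : Multigraph V E) (I : Set E) (v : V) (es : List E) (vs : List V) : Prop :=
  G.IsWalkFrom I v es vs v ∧ es ≠ [] ∧ es.Nodup ∧ vs.Nodup

/-- `C` is the edge set of a cycle of the subgraph `G[I]`. -/
def IsCycleIn (G : Multigraph V E) (I : Set E) (C : Set E) : Prop :=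
  ∃ v es vs, G.IsCycle I v es vs ∧ C = {e | e ∈ es}

/-- A path from `u` to `w`: a walk with pairwise distinct vertices. -/
def IsPath (G : Multigraph V E) (I : Set E) (u : V) (es : List E) (vs : List V)
    (w : V) : Prop :=
  G.IsWalkFrom I u es vs w ∧ (u :: vs).Nodup

/-- The vertices covered by an edge set `D`; the vertex set of `G[D]`. -/
def verts (G : Multigraph V E) (D : Set E) : Set V := {v | ∃ e ∈ D, v ∈ G.inc e}

/-- The degree of `v` in the subgraph `G[D]` (loops count twice). -/
noncomputable def degree (G : Multigraph V E) (D : Set E) (v : V) : ℕ :=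
  {e ∈ D | v ∈ G.inc e}.ncard + {e ∈ D | G.inc e = s(v, v)}.ncard

/-- Every connected component of `G[I]` contains at most one cycle:
any two cycles of `G[I]` lying in the same component coincide. -/
def BicircIndep (G : Multigraph V E) (I : Set E) : Prop :=
  ∀ C₁ C₂ : Set E, G.IsCycleIn I C₁ → G.IsCycleIn I C₂ →
    (∃ u w, u ∈ G.verts C₁ ∧ w ∈ G.verts C₂ ∧ G.Reachable I u w) → C₁ = C₂

/-- `M` is the bicircular matroid `B(G)` of the multigraph `G`. -/
def IsBicircularOf (G : Multigraph V E) (M : Matroid E) : Prop :=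
  M.E = univ ∧ ∀ I : Set E, M.Indep I ↔ G.BicircIndep I

end Multigraph

/-! ### Matroid notions -/

variable {α : Type*}

/-- The (extended) rank of a set in a matroid. -/
noncomputable def eRk (M : Matroid α) (X : Set α) : ℕ∞ :=
  ⨆ I ∈ {I | M.Indep I ∧ I ⊆ X}, I.encard

/-- A circuit: a minimal dependent set. -/
def Circuit (M : Matroid α) (C : Set α) : Prop :=
  M.Dep C ∧ ∀ D ⊂ C, ¬ M.Dep D

/-- A double circuit: a finite set `D` with `r(D) = |D| - 2` whose rank does not drop
when any single element is removed. -/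
def DoubleCircuit (M : Matroid α) (D : Set α) : Prop :=
  D ⊆ M.E ∧ D.Finite ∧ eRk M D + 2 = D.encard ∧ ∀ d ∈ D, eRk M (D \ {d}) = eRk M D

/-- `f` is a circuit partition of `D`: a partition of `D` into nonempty parts such that the
circuits of `M` contained in `D` are exactly the complements in `D` of the parts. -/
def CircuitPartition (M : Matroid α) (D : Set α) {k : ℕ} (f : Fin k → Set α) : Prop :=
  (∀ i, (f i).Nonempty) ∧ (∀ i j : Fin k, i ≠ j → Disjoint (f i) (f j)) ∧
    (⋃ i, f i) = D ∧ ∀ C : Set α, (Circuit M C ∧ C ⊆ D) ↔ ∃ i, C = D \ f i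

/-- A part of a partition is singular if it has exactly one element. -/
def PositiveDoubleCircuit (M : Matroid α) (D : Set α) : Prop :=
  DoubleCircuit M D ∧ ∃ (k : ℕ) (f : Fin k → Set α), CircuitPartition M D f ∧
    {i : Fin k | (f i).encard ≠ 1}.ncard < {i : Fin k | (f i).encard = 1}.ncard

/-- A hyperplane (copoint): a maximal proper flat. -/
def Hyperplane (M : Matroid α) (H : Set α) : Prop :=
  M.IsFlat H ∧ H ≠ M.E ∧ ∀ F, M.IsFlat F → H ⊂ F → F = M.E

/-- A coline: a flat of rank `r(M) - 2`. -/
def Coline (M : Matroid α) (L : Set α) : Prop :=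
  M.IsFlat L ∧ eRk M L + 2 = eRk M M.E

/-- A positive coline: more simple copoints on `L` than multiple copoints on `L`. -/
def PositiveColine (M : Matroid α) (L : Set α) : Prop :=
  Coline M L ∧
    {H | Hyperplane M H ∧ L ⊆ H ∧ (H \ L).encard ≠ 1}.ncard <
      {H | Hyperplane M H ∧ L ⊆ H ∧ (H \ L).encard = 1}.ncard

/-- Deletion of a set of elements. -/
def delete (M : Matroid α) (D : Set α) : Matroid α := M.restrict (M.E \ D)

/-- Contraction of a set of elements. -/
def contract (M : Matroid α) (C : Set α) : Matroid α := (delete M✶ C)✶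

/-- `N` is a minor of `M`. -/
def IsMinorOf (N M : Matroid α) : Prop := ∃ C D : Set α, N = delete (contract M C) D

/-- `M` is (isomorphic to) the uniform matroid `U_{r,n}`. -/
def IsUniform (r n : ℕ) {β : Type*} (M : Matroid β) : Prop :=
  M.E.encard = n ∧ ∀ I ⊆ M.E, (M.Indep I ↔ I.encard ≤ (r : ℕ∞))

/-- A simple matroid: every set of at most two elements of the ground set is independent. -/
def IsSimple (M : Matroid α) : Prop := ∀ X ⊆ M.E, X.encard ≤ 2 → M.Indep X

/-!
An edge `d` of a circuit `C` of `B(G)` that is the only edge of `C` at one of its ends lies on no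
cycle of `C` other than a loop, and deleting it does not disconnect the rest, so `C \ {d}` would
still be dependent. Applied to the circuits `D \ {eᵢ}`, this gives `G[D]` minimum degree `2` and
degree at least `3` at both ends of every singular edge. Since `D \ {e₁, e₂}` is independent, i.e.
has at most one cycle per component, it has at most as many edges as vertices, so
`|D| ≤ |V(D)| + 2` and by the handshake lemma at most four vertices have degree `≥ 3`. The four
singular edges thus span at most four vertices and, having at least as many edges as vertices,
contain a cycle.
-/

namespace Multigraph

variable {V E : Type*} {G : Multigraph V E} {I J : Set E}

def walkEnd (u : V) (vs : List V) : V := (u :: vs).getLast (List.cons_ne_nil u vs)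

@[simp] lemma walkEnd_nil (u : V) : walkEnd u [] = u := rfl

@[simp] lemma walkEnd_cons (u v : V) (vs : List V) : walkEnd u (v :: vs) = walkEnd v vs :=
  List.getLast_cons _

lemma walkEnd_append (u : V) (vs₁ vs₂ : List V) :
    walkEnd u (vs₁ ++ vs₂) = walkEnd (walkEnd u vs₁) vs₂ := by
  induction vs₁ generalizing u <;> simp_all

namespace IsWalk

variable {u : V} {es : List E} {vs : List V}

lemma mem_of_mem (h : G.IsWalk I u es vs) {e : E} (he : e ∈ es) : e ∈ I := by
  induction h with
  | nil => cases he
  | cons hI _ _ ih => exact (List.mem_cons.mp he).elim (· ▸ hI) ih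

lemma of_forall_mem (h : G.IsWalk I u es vs) (hJ : ∀ e ∈ es, e ∈ J) : G.IsWalk J u es vs := by
  induction h with
  | nil => exact .nil _
  | cons _ hinc _ ih => exact .cons (hJ _ (by simp)) hinc (ih fun e he => hJ e (by simp [he]))

lemma mono (h : G.IsWalk I u es vs) (hIJ : I ⊆ J) : G.IsWalk J u es vs :=
  h.of_forall_mem fun _ he => hIJ (h.mem_of_mem he)

lemma mem_of_mem_inc (h : G.IsWalk I u es vs) {e : E} (he : e ∈ es) {x : V}
    (hx : x ∈ G.inc e) : x ∈ u :: vs := by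
  induction h with
  | nil => cases he
  | cons _ hinc _ ih =>
    rcases List.mem_cons.mp he with rfl | he
    · rw [hinc, Sym2.mem_iff] at hx
      rcases hx with rfl | rfl <;> simp
    · exact List.mem_cons_of_mem _ (ih he)

lemma append {b : V} {es₂ : List E} {vs₂ : List V} (h₁ : G.IsWalk I u es vs)
    (hb : walkEnd u vs = b) (h₂ : G.IsWalk I b es₂ vs₂) :
    G.IsWalk I u (es ++ es₂) (vs ++ vs₂) := by
  induction h₁ with
  | nil => subst hb; exact h₂
  | cons hI hinc _ ih => exact .cons hI hinc (ih (by simpa using hb))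

lemma of_append {es₁ es₂ : List E} (h : G.IsWalk I u (es₁ ++ es₂) vs) :
    ∃ vs₁ vs₂, vs = vs₁ ++ vs₂ ∧ G.IsWalk I u es₁ vs₁ ∧ G.IsWalk I (walkEnd u vs₁) es₂ vs₂ := by
  induction es₁ generalizing u vs with
  | nil => exact ⟨[], vs, rfl, .nil _, h⟩
  | cons e es₁ ih =>
    cases h with
    | cons hI hinc h =>
      obtain ⟨vs₁, vs₂, rfl, h₁, h₂⟩ := ih h
      exact ⟨_ :: vs₁, vs₂, rfl, .cons hI hinc h₁, h₂⟩

lemma exists_prefix (h : G.IsWalk I u es vs) {x : V} (hx : x ∈ u :: vs) :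
    ∃ es₁ vs₁, es₁ <+: es ∧ vs₁ <+: vs ∧ G.IsWalk I u es₁ vs₁ ∧ walkEnd u vs₁ = x := by
  induction h with
  | nil => exact ⟨[], [], List.nil_prefix, List.nil_prefix, .nil _, (List.mem_singleton.mp hx).symm⟩
  | @cons u v e es vs hI hinc _ ih =>
    rcases List.mem_cons.mp hx with rfl | hx
    · exact ⟨[], [], List.nil_prefix, List.nil_prefix, .nil _, rfl⟩
    · obtain ⟨es₁, vs₁, hes, hvs, h₁, rfl⟩ := ih hx
      exact ⟨e :: es₁, v :: vs₁, (List.prefix_cons_inj _).2 hes, (List.prefix_cons_inj _).2 hvs,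
        .cons hI hinc h₁, rfl⟩

lemma nodup_edges (h : G.IsWalk I u es vs) (hnd : (u :: vs).Nodup) : es.Nodup := by
  induction h with
  | nil => exact List.nodup_nil
  | cons _ hinc h ih =>
    rw [List.nodup_cons] at hnd
    exact List.nodup_cons.mpr ⟨fun he => hnd.1 (h.mem_of_mem_inc he (by rw [hinc]; simp)),
      ih hnd.2⟩

lemma eq_head_of_mem_inc {e₁ e : E} (h : G.IsWalk I u (e₁ :: es) vs) (hnd : (u :: vs).Nodup)
    (he : e ∈ e₁ :: es) (hu : u ∈ G.inc e) : e = e₁ := by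
  cases h with
  | cons _ _ h =>
    rcases List.mem_cons.mp he with rfl | he
    · rfl
    · exact absurd (h.mem_of_mem_inc he hu) (List.nodup_cons.mp hnd).1

lemma eq_nil_of_forall_not_mem_inc {v : V} (h : G.IsWalk J v es vs)
    (hv : ∀ e ∈ J, v ∉ G.inc e) : es = [] := by
  cases h with
  | nil => rfl
  | cons hJ hinc _ => exact absurd (by rw [hinc]; simp) (hv _ hJ)

lemma start_eq_iff_walkEnd_eq {v : V} (h : G.IsWalk J u es vs)
    (hv : ∀ e ∈ J, v ∉ G.inc e) : u = v ↔ walkEnd u vs = v := by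
  induction h with
  | nil => rfl
  | @cons u x e es vs hJ hinc _ ih =>
    have hu : u ≠ v := fun h => hv e hJ (by rw [hinc, h]; simp)
    have hx : x ≠ v := fun h => hv e hJ (by rw [hinc, h]; simp)
    simp only [walkEnd_cons, ← ih, hu, hx]

end IsWalk

namespace Reachable

variable {u w x : V}

lemma refl (u : V) : G.Reachable I u u := ⟨[], [], .nil u, rfl⟩

lemma trans (h₁ : G.Reachable I u x) (h₂ : G.Reachable I x w) : G.Reachable I u w := by
  obtain ⟨es₁, vs₁, h₁, rfl⟩ := h₁
  obtain ⟨es₂, vs₂, h₂, rfl⟩ := h₂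
  exact ⟨_, _, h₁.append rfl h₂, walkEnd_append _ _ _⟩

lemma mono (h : G.Reachable I u w) (hIJ : I ⊆ J) : G.Reachable J u w := by
  obtain ⟨es, vs, h, hend⟩ := h
  exact ⟨es, vs, h.mono hIJ, hend⟩

lemma of_mem_inc {f : E} (hf : f ∈ I) (hu : u ∈ G.inc f) (hw : w ∈ G.inc f) :
    G.Reachable I u w := by
  obtain ⟨y, hy⟩ := Sym2.mem_iff_exists.mp hu
  rw [hy, Sym2.mem_iff] at hw
  rcases hw with rfl | rfl
  · exact refl _
  · exact ⟨[f], [w], .cons hf hy (.nil w), rfl⟩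

/-- Collapsing the vertex `v` onto `p` along the only edge `d = vp` of `C` at `v` turns
walks in `C` into walks in `C \ {d}`. -/
lemma sdiff_singleton [DecidableEq V] {C : Set E} {d : E} {v p : V} (hd : G.inc d = s(v, p))
    (huniq : ∀ e ∈ C, v ∈ G.inc e → e = d) (h : G.Reachable C u w) :
    G.Reachable (C \ {d}) (if u = v then p else u) (if w = v then p else w) := by
  obtain ⟨es, vs, h, rfl⟩ := h
  induction h with
  | nil => exact refl _
  | @cons u x e es vs hC hinc _ ih =>
    refine Reachable.trans ?_ ih
    by_cases he : e = d
    · subst he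
      have : (if u = v then p else u) = if x = v then p else x := by
        rcases Sym2.eq_iff.mp (hinc.symm.trans hd) with ⟨rfl, rfl⟩ | ⟨rfl, rfl⟩ <;> simp
      rw [this]
      exact refl _
    · have hu : u ≠ v := fun h => he (huniq e hC (by rw [hinc, h]; simp))
      have hx : x ≠ v := fun h => he (huniq e hC (by rw [hinc, h]; simp))
      simp only [hu, hx, if_false]
      exact of_mem_inc ⟨hC, he⟩ (by rw [hinc]; simp) (by rw [hinc]; simp)

lemma eq_iff_of_forall_not_mem_inc {v : V} (h : G.Reachable J u w)
    (hv : ∀ e ∈ J, v ∉ G.inc e) : u = v ↔ w = v := by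
  obtain ⟨es, vs, h, rfl⟩ := h
  exact h.start_eq_iff_walkEnd_eq hv

end Reachable

namespace IsCycleIn

variable {X : Set E}

lemma subset (h : G.IsCycleIn I X) : X ⊆ I := by
  obtain ⟨v, es, vs, hc, rfl⟩ := h
  exact fun _ he => hc.1.1.mem_of_mem he

lemma of_subset (h : G.IsCycleIn I X) (hX : X ⊆ J) : G.IsCycleIn J X := by
  obtain ⟨v, es, vs, ⟨⟨hw, hend⟩, hc⟩, rfl⟩ := h
  exact ⟨v, es, vs, ⟨⟨hw.of_forall_mem fun _ he => hX he, hend⟩, hc⟩, rfl⟩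

lemma mono (h : G.IsCycleIn I X) (hIJ : I ⊆ J) : G.IsCycleIn J X :=
  h.of_subset (h.subset.trans hIJ)

lemma nonempty (h : G.IsCycleIn I X) : X.Nonempty := by
  obtain ⟨v, es, vs, hc, rfl⟩ := h
  exact List.exists_mem_of_ne_nil _ hc.2.1

end IsCycleIn

lemma isCycleIn_singleton {e : E} {v : V} (he : e ∈ I) (hloop : G.inc e = s(v, v)) :
    G.IsCycleIn I {e} :=
  ⟨v, [e], [v], ⟨⟨.cons he hloop (.nil v), rfl⟩, by simp, by simp, by simp⟩, by ext; simp⟩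

lemma IsCycleIn.eq_singleton_of_unique_inc {C X : Set E} {d : E} {v : V}
    (h : G.IsCycleIn C X) (hd : d ∈ X) (hv : v ∈ G.inc d)
    (huniq : ∀ e ∈ C, v ∈ G.inc e → e = d) : X = {d} ∧ G.inc d = s(v, v) := by
  obtain ⟨v₀, es, vs, ⟨⟨hw, hend⟩, -, hnd, -⟩, rfl⟩ := h
  obtain ⟨a₁, a₂, rfl⟩ := List.append_of_mem hd
  have hda : d ∉ a₁ ∧ d ∉ a₂ := by
    simpa using (List.nodup_cons.mp (List.nodup_middle.mp hnd)).1
  obtain ⟨vs₁, vs₂, rfl, h₁, h₂⟩ := hw.of_append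
  obtain _ | @⟨_, z, _, _, vs₂, -, hinc, h₂⟩ := h₂
  have hJ : ∀ e ∈ C \ {d}, v ∉ G.inc e := fun e he hve => he.2 (huniq e he.1 hve)
  have h₁' : G.IsWalk (C \ {d}) v₀ a₁ vs₁ :=
    h₁.of_forall_mem fun e he => ⟨h₁.mem_of_mem he, ne_of_mem_of_not_mem he hda.1⟩
  have h₂' : G.IsWalk (C \ {d}) z a₂ vs₂ :=
    h₂.of_forall_mem fun e he => ⟨h₂.mem_of_mem he, ne_of_mem_of_not_mem he hda.2⟩
  have hiff₁ := h₁'.start_eq_iff_walkEnd_eq hJ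
  have hiff₂ := h₂'.start_eq_iff_walkEnd_eq hJ
  change walkEnd v₀ (vs₁ ++ _ :: vs₂) = v₀ at hend
  rw [walkEnd_append, walkEnd_cons] at hend
  rw [hinc, Sym2.mem_iff] at hv
  have hzv : z = v ↔ v₀ = v := hend ▸ hiff₂
  obtain ⟨hy, hz, rfl⟩ : walkEnd v₀ vs₁ = v ∧ z = v ∧ v₀ = v := by
    rcases hv with hv | hv
    · have := hiff₁.2 hv.symm
      exact ⟨hv.symm, hzv.2 this, this⟩
    · have := hzv.1 hv.symm
      exact ⟨hiff₁.1 this, hv.symm, this⟩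
  subst hz
  rw [h₁'.eq_nil_of_forall_not_mem_inc hJ, h₂'.eq_nil_of_forall_not_mem_inc hJ, hinc, hy]
  exact ⟨by ext; simp, rfl⟩

lemma not_bicircIndep_sdiff_singleton {C : Set E} {d : E} {v : V} (hC : ¬ G.BicircIndep C)
    (hd : d ∈ C) (hv : v ∈ G.inc d) (huniq : ∀ e ∈ C, v ∈ G.inc e → e = d) :
    ¬ G.BicircIndep (C \ {d}) := by
  classical
  obtain ⟨p, hp⟩ := Sym2.mem_iff_exists.mp hv
  simp only [BicircIndep] at hC ⊢
  push Not at hC ⊢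
  obtain ⟨C₁, C₂, h₁, h₂, ⟨u, w, hu, hw, huw⟩, hne⟩ := hC
  have hverts : ∀ X, G.IsCycleIn C X → (v ∈ G.verts X ↔ d ∈ X) := fun X hX =>
    ⟨fun ⟨e, he, hve⟩ => huniq e (hX.subset he) hve ▸ he, fun hdX => ⟨d, hdX, hv⟩⟩
  have hreach := huw.sdiff_singleton hp huniq
  by_cases hdC : d ∈ C₁ ∨ d ∈ C₂
  · exfalso
    obtain ⟨X, hX, hdX⟩ : ∃ X, G.IsCycleIn C X ∧ d ∈ X := hdC.elim (⟨C₁, h₁, ·⟩) (⟨C₂, h₂, ·⟩)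
    have hdv := (hX.eq_singleton_of_unique_inc hdX hv huniq).2
    have hpv : p = v := Sym2.congr_right.mp (hp.symm.trans hdv)
    have hπ : ∀ x : V, (if x = v then p else x) = x := fun x => by
      split_ifs with h <;> simp [h, hpv]
    rw [hπ, hπ] at hreach
    have hiff := hreach.eq_iff_of_forall_not_mem_inc fun e he hve => he.2 (huniq e he.1 hve)
    have hat : ∀ Y, G.IsCycleIn C Y → ∀ x ∈ G.verts Y, x = v ↔ d ∈ Y := by
      refine fun Y hY x hx => ⟨fun h => (hverts Y hY).1 (h ▸ hx), fun hdY => ?_⟩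
      obtain ⟨e, he, hxe⟩ := hx
      rw [(hY.eq_singleton_of_unique_inc hdY hv huniq).1, Set.mem_singleton_iff] at he
      rw [he, hdv] at hxe
      simpa using hxe
    have hboth : d ∈ C₁ ∧ d ∈ C₂ := by
      have := hat _ h₁ u hu
      have := hat _ h₂ w hw
      tauto
    exact hne ((h₁.eq_singleton_of_unique_inc hboth.1 hv huniq).1.trans
      (h₂.eq_singleton_of_unique_inc hboth.2 hv huniq).1.symm)
  · push Not at hdC
    have hu' : u ≠ v := fun h => hdC.1 ((hverts _ h₁).1 (h ▸ hu))
    have hw' : w ≠ v := fun h => hdC.2 ((hverts _ h₂).1 (h ▸ hw))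
    simp only [hu', hw', if_false] at hreach
    have hsub : ∀ X, G.IsCycleIn C X → d ∉ X → G.IsCycleIn (C \ {d}) X := fun X hX hdX =>
      hX.of_subset fun e he => ⟨hX.subset he, by rintro rfl; exact hdX he⟩
    exact ⟨C₁, C₂, hsub _ h₁ hdC.1, hsub _ h₂ hdC.2, ⟨u, w, hu, hw, hreach⟩, hne⟩

lemma BicircIndep.mono (h : G.BicircIndep I) (hJI : J ⊆ I) : G.BicircIndep J :=
  fun C₁ C₂ h₁ h₂ ⟨u, w, hu, hw, huw⟩ =>
    h C₁ C₂ (h₁.mono hJI) (h₂.mono hJI) ⟨u, w, hu, hw, huw.mono hJI⟩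

lemma verts_mono (h : I ⊆ J) : G.verts I ⊆ G.verts J :=
  fun _ ⟨e, he, hv⟩ => ⟨e, h he, hv⟩

lemma verts_union : G.verts (I ∪ J) = G.verts I ∪ G.verts J := by
  ext v
  simp only [verts, Set.mem_union, Set.mem_ofPred_eq, or_and_right, exists_or]

lemma finite_verts (hI : I.Finite) : (G.verts I).Finite := by
  classical
  refine (hI.biUnion fun e _ => (G.inc e).toFinset.finite_toSet).subset ?_
  rintro v ⟨e, he, hv⟩
  exact Set.mem_biUnion he (Sym2.mem_toFinset.2 hv)

lemma IsWalk.mem_verts {u x : V} {es : List E} {vs : List V} (h : G.IsWalk I u es vs)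
    (hx : x ∈ vs) : x ∈ G.verts I := by
  induction h with
  | nil => cases hx
  | cons hI hinc _ ih =>
    rcases List.mem_cons.mp hx with rfl | hx
    · exact ⟨_, hI, by rw [hinc]; simp⟩
    · exact ih hx

lemma IsWalk.isCycleIn_or_exists_cons
    (hI : ∀ e ∈ I, ∀ v ∈ G.inc e, ∃ e' ∈ I, e' ≠ e ∧ v ∈ G.inc e') {u : V} {es : List E}
    {vs : List V} (hw : G.IsWalk I u es vs) (hnd : (u :: vs).Nodup) (hu : u ∈ G.verts I) :
    (∃ X, G.IsCycleIn I X) ∨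
      ∃ x e, x ∈ G.verts I ∧ G.IsWalk I x (e :: es) (u :: vs) ∧ (x :: u :: vs).Nodup := by
  obtain ⟨e', he'I, hue', he'es⟩ : ∃ e' ∈ I, u ∈ G.inc e' ∧ e' ∉ es := by
    cases hw with
    | nil =>
      obtain ⟨e, he, hue⟩ := hu
      exact ⟨e, he, hue, List.not_mem_nil⟩
    | cons he hinc hw' =>
      obtain ⟨e', he', hne', hue'⟩ := hI _ he u (by rw [hinc]; simp)
      exact ⟨e', he', hue', fun hmem => hne' ((hw'.cons he hinc).eq_head_of_mem_inc hnd hmem hue')⟩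
  obtain ⟨x, hx⟩ := Sym2.mem_iff_exists.mp hue'
  have hx' : G.inc e' = s(x, u) := hx.trans Sym2.eq_swap
  by_cases hxin : x ∈ u :: vs
  · obtain ⟨es₁, vs₁, hes, hvs, hw₁, hend⟩ := hw.exists_prefix hxin
    refine .inl ⟨_, x, e' :: es₁, u :: vs₁,
      ⟨⟨.cons he'I hx' hw₁, (walkEnd_cons x u vs₁).trans hend⟩, List.cons_ne_nil _ _, ?_,
        hnd.sublist ((List.prefix_cons_inj u).2 hvs).sublist⟩, rfl⟩
    exact List.nodup_cons.2 ⟨fun h => he'es (hes.subset h),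
      (hw.nodup_edges hnd).sublist hes.sublist⟩
  · exact .inr ⟨x, e', ⟨e', he'I, by rw [hx]; simp⟩, .cons he'I hx' hw,
      List.nodup_cons.2 ⟨hxin, hnd⟩⟩

lemma exists_isCycleIn_of_forall_exists_ne (hfin : I.Finite) (hne : I.Nonempty)
    (hI : ∀ e ∈ I, ∀ v ∈ G.inc e, ∃ e' ∈ I, e' ≠ e ∧ v ∈ G.inc e') : ∃ X, G.IsCycleIn I X := by
  classical
  by_contra hno
  have hpath : ∀ n, ∃ u es vs, G.IsWalk I u es vs ∧ (u :: vs).Nodup ∧ u ∈ G.verts I ∧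
      n ≤ vs.length := by
    intro n
    induction n with
    | zero =>
      obtain ⟨e, he⟩ := hne
      exact ⟨_, [], [], .nil _, List.nodup_singleton _, ⟨e, he, Sym2.out_fst_mem _⟩, le_rfl⟩
    | succ n ih =>
      obtain ⟨u, es, vs, hw, hnd, hu, hn⟩ := ih
      rcases hw.isCycleIn_or_exists_cons hI hnd hu with hc | ⟨x, e, hx, hw', hnd'⟩
      · exact absurd hc hno
      · exact ⟨x, _, _, hw', hnd', hx, by simpa using hn⟩
  obtain ⟨u, es, vs, hw, hnd, -, hn⟩ := hpath ((G.verts I).ncard + 1)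
  have hlen : vs.length ≤ (G.verts I).ncard := by
    rw [← List.toFinset_card_of_nodup hnd.of_cons, ← Set.ncard_coe_finset]
    exact Set.ncard_le_ncard (fun x hx => hw.mem_verts (by simpa using hx)) (finite_verts hfin)
  omega

lemma exists_isCycleIn_of_ncard_verts_le (hI : I.Finite) (hne : I.Nonempty)
    (h : (G.verts I).ncard ≤ I.ncard) : ∃ X, G.IsCycleIn I X := by
  induction hn : I.ncard using Nat.strong_induction_on generalizing I with
  | _ n ih =>
  by_cases hpend : ∃ e ∈ I, ∃ v ∈ G.inc e, ∀ e' ∈ I, v ∈ G.inc e' → e' = e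
  · obtain ⟨e, he, v, hv, huniq⟩ := hpend
    obtain ⟨p, hp⟩ := Sym2.mem_iff_exists.mp hv
    by_cases hpv : p = v
    · exact ⟨{e}, isCycleIn_singleton he (hpv ▸ hp)⟩
    have hvI : v ∈ G.verts I := ⟨e, he, hv⟩
    have hpI : p ∈ G.verts I := ⟨e, he, by rw [hp]; simp⟩
    have hVfin := finite_verts (G := G) hI
    have hsub : G.verts (I \ {e}) ⊆ G.verts I \ {v} := fun x ⟨f, hf, hx⟩ =>
      ⟨⟨f, hf.1, hx⟩, by rintro rfl; exact hf.2 (huniq f hf.1 hx)⟩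
    have hV := (Set.ncard_le_ncard hsub hVfin.sdiff).trans_eq
      (Set.ncard_sdiff_singleton_of_mem hvI)
    have hIe := Set.ncard_sdiff_singleton_add_one he hI
    have hne' : (I \ {e}).Nonempty := by
      by_contra h0
      rw [Set.not_nonempty_iff_eq_empty, Set.sdiff_eq_empty] at h0
      have h2 := Set.ncard_le_ncard (Set.pair_subset hvI hpI) hVfin
      have h1 := Set.ncard_le_ncard h0
      rw [Set.ncard_pair (Ne.symm hpv)] at h2
      rw [Set.ncard_singleton] at h1
      omega
    have hpos := (Set.ncard_pos hVfin).2 ⟨v, hvI⟩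
    obtain ⟨X, hX⟩ := ih _ (by omega) hI.sdiff hne' (by omega) rfl
    exact ⟨X, hX.mono Set.sdiff_subset⟩
  · push Not at hpend
    exact exists_isCycleIn_of_forall_exists_ne hI hne fun e he v hv =>
      (hpend e he v hv).imp fun e' ⟨he', hve', hne'⟩ => ⟨he', hne', hve'⟩

/-- If `|I| > |V(I)|`, then `I` contains a cycle `Z`, and deleting an edge of `Z` leaves another
cycle `Z'`. As `Z'` cannot meet the component of `Z`, `I` splits into two vertex-disjoint parts,
one of which again has more edges than vertices. -/
lemma BicircIndep.ncard_le_ncard_verts (hI : I.Finite) (hB : G.BicircIndep I) :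
    I.ncard ≤ (G.verts I).ncard := by
  induction hn : I.ncard using Nat.strong_induction_on generalizing I with
  | _ n ih =>
  by_contra! hlt
  have hne : I.Nonempty := (Set.ncard_pos hI).1 (by omega)
  obtain ⟨Z, hZ⟩ := exists_isCycleIn_of_ncard_verts_le (G := G) hI hne (by omega)
  obtain ⟨e, heZ⟩ := hZ.nonempty
  have heI := hZ.subset heZ
  have hIe := Set.ncard_sdiff_singleton_add_one heI hI
  have hne' : (I \ {e}).Nonempty := (Set.ncard_pos hI.sdiff).1 (by
    have := (Set.ncard_pos (finite_verts (G := G) hI)).2 ⟨_, e, heI, Sym2.out_fst_mem _⟩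
    omega)
  obtain ⟨Z', hZ'⟩ := exists_isCycleIn_of_ncard_verts_le (G := G) hI.sdiff hne' (by
    have := Set.ncard_le_ncard (verts_mono (G := G) (Set.sdiff_subset (t := {e})))
      (finite_verts hI)
    omega)
  obtain ⟨f, hfZ⟩ := hZ.nonempty
  set z := (G.inc f).out.1
  set A := {g ∈ I | ∃ x ∈ G.inc g, G.Reachable I z x}
  have hAI : A ⊆ I := Set.sep_subset _ _
  have hfA : f ∈ A := ⟨hZ.subset hfZ, z, Sym2.out_fst_mem _, .refl z⟩
  obtain ⟨f', hf'Z', hf'A⟩ : ∃ f' ∈ Z', f' ∉ A := by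
    obtain ⟨f', hf'⟩ := hZ'.nonempty
    refine ⟨f', hf', fun ⟨_, x, hx, hzx⟩ => ?_⟩
    have := hB Z Z' hZ (hZ'.mono Set.sdiff_subset)
      ⟨z, x, ⟨f, hfZ, Sym2.out_fst_mem _⟩, ⟨f', hf', hx⟩, hzx⟩
    exact (hZ'.subset (this ▸ heZ)).2 rfl
  have hdisj : Disjoint (G.verts A) (G.verts (I \ A)) := by
    refine Set.disjoint_left.2 fun x ⟨g, ⟨hgI, y, hy, hzy⟩, hxg⟩ ⟨g', hg', hxg'⟩ => hg'.2 ?_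
    exact ⟨hg'.1, x, hxg', hzy.trans (.of_mem_inc hgI hy hxg)⟩
  have hAle := ih _ (hn ▸ Set.ncard_lt_ncard ⟨hAI, fun h => hf'A (h (hZ'.subset hf'Z').1)⟩ hI)
    (hI.subset hAI) (hB.mono hAI) rfl
  have hBle := ih _
    (hn ▸ Set.ncard_lt_ncard ⟨Set.sdiff_subset, fun h => (h (hZ.subset hfZ)).2 hfA⟩ hI)
    hI.sdiff (hB.mono Set.sdiff_subset) rfl
  have hsplit := Set.ncard_sdiff_add_ncard_of_subset hAI hI
  rw [← Set.union_sdiff_cancel hAI, verts_union, Set.ncard_union_eq hdisj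
    (finite_verts (hI.subset hAI)) (finite_verts hI.sdiff)] at hlt
  omega

lemma sum_ite_mem_add_ite_eq_diag [DecidableEq V] (z : Sym2 V) (s : Finset V)
    (hs : ∀ x ∈ z, x ∈ s) :
    ∑ v ∈ s, ((if v ∈ z then 1 else 0) + (if z = s(v, v) then 1 else 0)) = 2 := by
  induction z using Sym2.ind with
  | _ a b =>
  have ha := hs a (by simp)
  have hb := hs b (by simp)
  rw [Finset.sum_add_distrib]
  by_cases hab : a = b
  · subst hab
    simp [ha, eq_comm]
  · simp [Finset.sum_boole, Finset.filter_or, Finset.filter_eq', ha, hb, hab]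
    rintro x - rfl rfl
    exact hab rfl

lemma sum_degree_eq_two_mul_ncard {D : Set E} (hD : D.Finite) :
    ∑ v ∈ (finite_verts (G := G) hD).toFinset, G.degree D v = 2 * D.ncard := by
  classical
  have hdeg : ∀ v, G.degree D v = ∑ e ∈ hD.toFinset,
      ((if v ∈ G.inc e then 1 else 0) + (if G.inc e = s(v, v) then 1 else 0)) := by
    intro v
    rw [Finset.sum_add_distrib, Finset.sum_boole, Finset.sum_boole, degree,
      ← Set.ncard_coe_finset, ← Set.ncard_coe_finset]
    congr 2 <;> ext <;> simp
  rw [Finset.sum_congr rfl fun v _ => hdeg v, Finset.sum_comm, Set.ncard_eq_toFinset_card D hD,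
    mul_comm, ← smul_eq_mul, ← Finset.sum_const]
  refine Finset.sum_congr rfl fun e he => sum_ite_mem_add_ite_eq_diag _ _ fun x hx => ?_
  simpa using ⟨e, by simpa using he, hx⟩

lemma ncard_three_le_degree_add_le {D : Set E} (hD : D.Finite)
    (h2 : ∀ v ∈ G.verts D, 2 ≤ G.degree D v) :
    {v ∈ G.verts D | 3 ≤ G.degree D v}.ncard + 2 * (G.verts D).ncard ≤ 2 * D.ncard := by
  classical
  have hVfin := finite_verts (G := G) hD
  have hhigh : {v ∈ G.verts D | 3 ≤ G.degree D v} =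
      ↑(hVfin.toFinset.filter fun v => 3 ≤ G.degree D v) := by
    ext; simp
  rw [← sum_degree_eq_two_mul_ncard (G := G) hD, hhigh, Set.ncard_coe_finset,
    Set.ncard_eq_toFinset_card _ hVfin, Finset.card_filter, mul_comm, ← smul_eq_mul,
    ← Finset.sum_const, ← Finset.sum_add_distrib]
  refine Finset.sum_le_sum fun v hv => ?_
  have := h2 v (by simpa using hv)
  split_ifs <;> omega

lemma ncard_le_degree {D s : Set E} (hD : D.Finite) {v : V} (hs : s ⊆ D)
    (hv : ∀ e ∈ s, v ∈ G.inc e) : s.ncard ≤ G.degree D v :=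
  (Set.ncard_le_ncard (t := {e ∈ D | v ∈ G.inc e}) (fun e he => ⟨hs he, hv e he⟩)
    (hD.subset (Set.sep_subset _ _))).trans (Nat.le_add_right _ _)

namespace IsBicircularOf

variable {M : Matroid E} {C D : Set E} {x y : E}

lemma bicircIndep_of_ssubset (hM : G.IsBicircularOf M) (hC : Circuit M C) {Y : Set E}
    (hY : Y ⊂ C) : G.BicircIndep Y :=
  (hM.2 Y).1 (by by_contra h; exact hC.2 Y hY ⟨h, hM.1 ▸ Set.subset_univ Y⟩)

lemma not_bicircIndep (hM : G.IsBicircularOf M) (hC : Circuit M C) : ¬ G.BicircIndep C :=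
  fun h => hC.1.1 ((hM.2 C).2 h)

lemma exists_ne_mem_inc (hM : G.IsBicircularOf M) (hC : Circuit M C) {e : E} {v : V}
    (he : e ∈ C) (hv : v ∈ G.inc e) : ∃ e' ∈ C, e' ≠ e ∧ v ∈ G.inc e' := by
  by_contra! h
  exact not_bicircIndep_sdiff_singleton (hM.not_bicircIndep hC) he hv
    (fun e' he' hve' => by_contra fun hne => h e' he' hne hve')
    (hM.bicircIndep_of_ssubset hC (Set.sdiff_singleton_ssubset.2 he))

lemma two_le_degree (hM : G.IsBicircularOf M) (hD : D.Finite) (hx : Circuit M (D \ {x}))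
    (hy : Circuit M (D \ {y})) (hxy : x ≠ y) {v : V} (hv : v ∈ G.verts D) :
    2 ≤ G.degree D v := by
  obtain ⟨e, he, hve⟩ := hv
  obtain ⟨C, hC, heC, hCD⟩ : ∃ C, Circuit M C ∧ e ∈ C ∧ C ⊆ D := by
    by_cases hex : e = x
    · exact ⟨_, hy, ⟨he, hex ▸ hxy⟩, Set.sdiff_subset⟩
    · exact ⟨_, hx, ⟨he, hex⟩, Set.sdiff_subset⟩
  obtain ⟨e', he', hne, hve'⟩ := hM.exists_ne_mem_inc hC heC hve
  rw [← Set.ncard_pair hne]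
  exact ncard_le_degree hD (Set.pair_subset (hCD he') he) (by simp [hve, hve'])

lemma three_le_degree (hM : G.IsBicircularOf M) (hD : D.Finite) (hx : Circuit M (D \ {x}))
    (hy : Circuit M (D \ {y})) (hxy : x ≠ y) (hxD : x ∈ D) {v : V} (hv : v ∈ G.inc x) :
    3 ≤ G.degree D v := by
  obtain ⟨e', ⟨he'D, -⟩, he'x, hve'⟩ := hM.exists_ne_mem_inc hy ⟨hxD, hxy⟩ hv
  obtain ⟨e'', ⟨he''D, he''x⟩, he''e', hve''⟩ := hM.exists_ne_mem_inc hx ⟨he'D, he'x⟩ hve'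
  rw [← Set.ncard_eq_three.2 ⟨x, e', e'', he'x.symm, Ne.symm he''x, he''e'.symm, rfl⟩]
  exact ncard_le_degree hD (by simp [Set.insert_subset_iff, hxD, he'D, he''D])
    (by simp [hv, hve', hve''])

lemma ncard_le_ncard_verts_add_two (hM : G.IsBicircularOf M) (hD : D.Finite)
    (hx : Circuit M (D \ {x})) (hxy : x ≠ y) (hxD : x ∈ D) (hyD : y ∈ D) :
    D.ncard ≤ (G.verts D).ncard + 2 := by
  have hsub : D \ {x, y} ⊂ D \ {x} :=
    ⟨Set.sdiff_subset_sdiff_right (by simp), fun h => (h ⟨hyD, Ne.symm hxy⟩).2 (by simp)⟩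
  have h₁ := (hM.bicircIndep_of_ssubset hx hsub).ncard_le_ncard_verts hD.sdiff
  have h₂ := Set.ncard_le_ncard (verts_mono (G := G) (Set.sdiff_subset (t := {x, y})))
    (finite_verts hD)
  have h₃ := Set.ncard_sdiff_add_ncard_of_subset (Set.pair_subset hxD hyD) hD
  rw [Set.ncard_pair hxy] at h₃
  omega

lemma ncard_three_le_degree_le_four (hM : G.IsBicircularOf M) (hD : D.Finite)
    (hx : Circuit M (D \ {x})) (hy : Circuit M (D \ {y})) (hxy : x ≠ y) (hxD : x ∈ D)
    (hyD : y ∈ D) : {v ∈ G.verts D | 3 ≤ G.degree D v}.ncard ≤ 4 := by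
  have h₁ := ncard_three_le_degree_add_le hD fun v hv => hM.two_le_degree hD hx hy hxy hv
  have h₂ := hM.ncard_le_ncard_verts_add_two hD hx hxy hxD hyD
  omega

end IsBicircularOf

end Multigraph

namespace CircuitPartition

variable {M : Matroid α} {D : Set α} {k : ℕ} {f : Fin k → Set α} {i j : Fin k} {x y : α}

lemma mem_of_eq_singleton (hf : CircuitPartition M D f) (hi : f i = {x}) : x ∈ D :=
  hf.2.2.1 ▸ Set.mem_iUnion.2 ⟨i, hi ▸ rfl⟩

lemma ne_of_eq_singleton (hf : CircuitPartition M D f) (hij : i ≠ j) (hi : f i = {x})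
    (hj : f j = {y}) : x ≠ y :=
  Set.disjoint_singleton.1 (hi ▸ hj ▸ hf.2.1 i j hij)

lemma circuit_sdiff_singleton (hf : CircuitPartition M D f) (hi : f i = {x}) :
    Circuit M (D \ {x}) :=
  hi ▸ ((hf.2.2.2 _).2 ⟨i, rfl⟩).1

end CircuitPartition

/-- If the circuit partition of a double circuit `D` of `B(G)` has at
least `4` singular parts `{e₁}, {e₂}, {e₃}, {e₄}`, then the edges `e₁, e₂, e₃, e₄` span a
subgraph of `G` with at most `4` vertices, and `G` contains a cycle of length at most `4`. -/
theorem four_singular_parts_short_cycle {V E : Type*} (G : Multigraph V E)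
    (M : Matroid E) (hM : Multigraph.IsBicircularOf G M) (D : Set E)
    (hD : DoubleCircuit M D) {k : ℕ} (f : Fin k → Set E) (hf : CircuitPartition M D f)
    (i₁ i₂ i₃ i₄ : Fin k)
    (hij : i₁ ≠ i₂ ∧ i₁ ≠ i₃ ∧ i₁ ≠ i₄ ∧ i₂ ≠ i₃ ∧ i₂ ≠ i₄ ∧ i₃ ≠ i₄)
    (e₁ e₂ e₃ e₄ : E) (h₁ : f i₁ = {e₁}) (h₂ : f i₂ = {e₂}) (h₃ : f i₃ = {e₃})
    (h₄ : f i₄ = {e₄}) :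
    (G.verts {e₁, e₂, e₃, e₄}).encard ≤ 4 ∧
      ∃ C : Set E, G.IsCycleIn univ C ∧ C.encard ≤ 4 := by
  have hDfin := hD.2.1
  obtain ⟨h12, h13, h14, h23, h24, h34⟩ := hij
  have hne := fun {i j x y} (hij : i ≠ j) (hi : f i = {x}) (hj : f j = {y}) =>
    hf.ne_of_eq_singleton hij hi hj
  have hdeg : ∀ {i j x y}, i ≠ j → f i = {x} → f j = {y} → ∀ v ∈ G.inc x, 3 ≤ G.degree D v :=
    fun hij hi hj _ => hM.three_le_degree hDfin (hf.circuit_sdiff_singleton hi)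
      (hf.circuit_sdiff_singleton hj) (hne hij hi hj) (hf.mem_of_eq_singleton hi)
  set S : Set E := {e₁, e₂, e₃, e₄}
  have hSD : S ⊆ D := by
    rintro e (rfl | rfl | rfl | rfl) <;> exact hf.mem_of_eq_singleton ‹_›
  have hSV : G.verts S ⊆ {v ∈ G.verts D | 3 ≤ G.degree D v} := by
    rintro v ⟨e, he, hv⟩
    refine ⟨⟨e, hSD he, hv⟩, ?_⟩
    rcases he with rfl | rfl | rfl | rfl
    exacts [hdeg h12 h₁ h₂ v hv, hdeg h12.symm h₂ h₁ v hv, hdeg h13.symm h₃ h₁ v hv,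
      hdeg h14.symm h₄ h₁ v hv]
  have hV : (G.verts S).ncard ≤ 4 :=
    (Set.ncard_le_ncard hSV ((Multigraph.finite_verts hDfin).subset (Set.sep_subset _ _))).trans
      (hM.ncard_three_le_degree_le_four hDfin (hf.circuit_sdiff_singleton h₁)
        (hf.circuit_sdiff_singleton h₂) (hne h12 h₁ h₂) (hSD (by simp [S])) (hSD (by simp [S])))
  have hS : S.ncard = 4 := by
    rw [Set.ncard_insert_of_notMem, Set.ncard_insert_of_notMem, Set.ncard_pair (hne h34 h₃ h₄)] <;>
      simp [hne h12 h₁ h₂, hne h13 h₁ h₃, hne h14 h₁ h₄, hne h23 h₂ h₃, hne h24 h₂ h₄]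
  obtain ⟨C, hC⟩ := Multigraph.exists_isCycleIn_of_ncard_verts_le S.toFinite ⟨e₁, by simp [S]⟩
    (hS ▸ hV)
  refine ⟨(Multigraph.finite_verts S.toFinite).cast_ncard_eq ▸ by exact_mod_cast hV, C,
    hC.mono (Set.subset_univ _), (Set.encard_le_encard hC.subset).trans ?_⟩
  rw [← S.toFinite.cast_ncard_eq, hS]
  rfl

end Paper
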